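/- arXiv:1307.3375 — 2 statements merged into one kernel-verified Lean document; each statement's English description precedes it below -/
import Mathlib

section
/- For a renewal reward process Z_t = \sum_{i=1}^{N_t} Y_i with i.i.d. pairs (X_n,Y_n), E[X]<\infty, P(X=0)<1, Z_t/t converges almost surely to E[Y]/E[X] as t\to\infty. -/
/-!
Apply the strong law of large numbers to both coordinates: almost surely `T n / n → E[X]` and
`(∑_{i<n} Y i) / n → E[Y]`. Since `E[X] > 0`, `T n → ∞`, so `N t → ∞`, and the renewal sandwich
`T (N t) ≤ t < T (N t + 1)` gives `t / N t → E[X]`. Hence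
`Z t / t = (Z t / N t) · (N t / t) → E[Y] / E[X]`.
-/

open MeasureTheory ProbabilityTheory Filter Set
open scoped Topology

section Deterministic

variable {a : ℕ → ℝ} {m : ℝ}

lemma tendsto_atTop_of_tendsto_div_natCast (hm : 0 < m)
    (ha : Tendsto (fun n : ℕ => a n / n) atTop (𝓝 m)) : Tendsto a atTop atTop := by
  refine (ha.pos_mul_atTop hm tendsto_natCast_atTop_atTop).congr' ?_
  filter_upwards [eventually_ne_atTop 0] with n hn
  field_simp

lemma tendsto_succ_div_natCast (ha : Tendsto (fun n : ℕ => a n / n) atTop (𝓝 m)) :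
    Tendsto (fun n : ℕ => a (n + 1) / n) atTop (𝓝 m) := by
  have hshift : Tendsto (fun n : ℕ => a (n + 1) / ((n : ℝ) + 1)) atTop (𝓝 m) := by
    simpa [Function.comp_def] using ha.comp (tendsto_add_atTop_nat 1)
  have hratio : Tendsto (fun n : ℕ => ((n : ℝ) + 1) / n) atTop (𝓝 1) := by
    simpa using (tendsto_natCast_div_add_atTop (1 : ℝ)).inv₀ one_ne_zero
  refine (by simpa using hshift.mul hratio : Tendsto _ atTop (𝓝 m)).congr' ?_
  filter_upwards [eventually_ne_atTop 0] with n hn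
  field_simp

/-- Junk value `0` when `{n | a n ≤ t}` is unbounded, which cannot happen once `a → ∞`. -/
noncomputable def renewalCount (a : ℕ → ℝ) (t : ℝ) : ℕ := sSup {n | a n ≤ t}

lemma bddAbove_setOf_le (ha : Tendsto a atTop atTop) (t : ℝ) : BddAbove {n | a n ≤ t} := by
  obtain ⟨M, hM⟩ := (ha.eventually_gt_atTop t).exists_forall_of_atTop
  exact ⟨M, fun n hn => not_lt.1 fun h => (hM n h.le).not_ge hn⟩

lemma apply_renewalCount_le (ha : Tendsto a atTop atTop) {t : ℝ} (ht : a 0 ≤ t) :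
    a (renewalCount a t) ≤ t :=
  Nat.sSup_mem ⟨0, ht⟩ (bddAbove_setOf_le ha t)

lemma lt_apply_renewalCount_succ (ha : Tendsto a atTop atTop) (t : ℝ) :
    t < a (renewalCount a t + 1) :=
  not_le.1 fun h => (le_csSup (bddAbove_setOf_le ha t) h).not_gt (Nat.lt_succ_self _)

lemma tendsto_renewalCount_atTop (ha : Tendsto a atTop atTop) :
    Tendsto (renewalCount a) atTop atTop :=
  tendsto_atTop_atTop.2 fun n => ⟨a n, fun _ ht => le_csSup (bddAbove_setOf_le ha _) ht⟩

lemma tendsto_div_renewalCount (hm : 0 < m)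
    (hA : Tendsto (fun n : ℕ => a n / n) atTop (𝓝 m)) :
    Tendsto (fun t : ℝ => t / renewalCount a t) atTop (𝓝 m) := by
  have ha := tendsto_atTop_of_tendsto_div_natCast hm hA
  have hN := tendsto_renewalCount_atTop ha
  have hsandwich : ∀ᶠ t in atTop, a (renewalCount a t) ≤ t ∧ t ≤ a (renewalCount a t + 1) := by
    filter_upwards [eventually_ge_atTop (a 0)] with t ht
    exact ⟨apply_renewalCount_le ha ht, (lt_apply_renewalCount_succ ha t).le⟩
  refine tendsto_of_tendsto_of_tendsto_of_le_of_le' (hA.comp hN)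
    ((tendsto_succ_div_natCast hA).comp hN) ?_ ?_ <;>
  filter_upwards [hsandwich] with t ⟨hlow, hhigh⟩
  · exact div_le_div_of_nonneg_right hlow (Nat.cast_nonneg _)
  · exact div_le_div_of_nonneg_right hhigh (Nat.cast_nonneg _)

theorem tendsto_apply_renewalCount_div {b : ℕ → ℝ} {L : ℝ} (hm : 0 < m)
    (hA : Tendsto (fun n : ℕ => a n / n) atTop (𝓝 m))
    (hB : Tendsto (fun n : ℕ => b n / n) atTop (𝓝 L)) :
    Tendsto (fun t : ℝ => b (renewalCount a t) / t) atTop (𝓝 (L / m)) := by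
  have hN := tendsto_renewalCount_atTop (tendsto_atTop_of_tendsto_div_natCast hm hA)
  have hNdiv : Tendsto (fun t : ℝ => (renewalCount a t : ℝ) / t) atTop (𝓝 m⁻¹) := by
    simpa using (tendsto_div_renewalCount hm hA).inv₀ hm.ne'
  rw [div_eq_mul_inv]
  refine ((hB.comp hN).mul hNdiv).congr' ?_
  filter_upwards [hN.eventually_ne_atTop 0] with t hNt
  have : (renewalCount a t : ℝ) ≠ 0 := Nat.cast_ne_zero.2 hNt
  simp [field]

end Deterministic

lemma integral_pos_of_measure_setOf_eq_zero_lt_one {Ω : Type*} [MeasurableSpace Ω]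
    {μ : Measure Ω} [IsProbabilityMeasure μ] {f : Ω → ℝ} (hf : 0 ≤ᵐ[μ] f)
    (hfi : Integrable f μ) (h0 : μ {ω | f ω = 0} < 1) : 0 < ∫ ω, f ω ∂μ := by
  rw [integral_pos_iff_support_of_nonneg_ae hf hfi, pos_iff_ne_zero]
  intro hsupp
  have : {ω | f ω = 0} =ᵐ[μ] (univ : Set Ω) := by
    rw [ae_eq_univ]
    simpa [Function.support, compl_ofPred] using hsupp
  simp [measure_congr this] at h0

theorem stmt11_general {Ω : Type*} [MeasurableSpace Ω] (μ : Measure Ω) [IsProbabilityMeasure μ]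
    (X Y : ℕ → Ω → ℝ)
    (hXnonneg : ∀ i, ∀ᵐ ω ∂μ, 0 ≤ X i ω)
    (hiid : ∀ i j, IdentDistrib (fun ω => (X i ω, Y i ω)) (fun ω => (X j ω, Y j ω)) μ μ)
    (hindep : iIndepFun (fun i ω => (X i ω, Y i ω)) μ)
    (hX0 : μ {ω | X 0 ω = 0} < 1)
    (hXint : Integrable (X 0) μ) (hYint : Integrable (Y 0) μ)
    (T : ℕ → Ω → ℝ) (hT : ∀ n ω, T n ω = ∑ i ∈ Finset.range n, X i ω)
    (N : ℝ → Ω → ℕ) (hN : ∀ t ω, N t ω = sSup {n | T n ω ≤ t}) :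
    ∀ᵐ ω ∂μ, Tendsto (fun t : ℝ => (∑ i ∈ Finset.range (N t ω), Y i ω) / t) atTop
      (nhds ((∫ ω, Y 0 ω ∂μ) / ∫ ω, X 0 ω ∂μ)) := by
  have hm := integral_pos_of_measure_setOf_eq_zero_lt_one (hXnonneg 0) hXint hX0
  have hlawX := strong_law_ae_real X hXint
    (fun i j hij => (hindep.indepFun hij).comp measurable_fst measurable_fst)
    (fun i => (hiid i 0).comp measurable_fst)
  have hlawY := strong_law_ae_real Y hYint
    (fun i j hij => (hindep.indepFun hij).comp measurable_snd measurable_snd)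
    (fun i => (hiid i 0).comp measurable_snd)
  filter_upwards [hlawX, hlawY] with ω hXω hYω
  have hNω : ∀ t, N t ω = renewalCount (T · ω) t := fun t => hN t ω
  simp only [hNω]
  have hTω : Tendsto (fun n : ℕ => T n ω / n) atTop (𝓝 (∫ ω, X 0 ω ∂μ)) := by
    simpa only [hT] using hXω
  exact tendsto_apply_renewalCount_div hm hTω hYω

/-- Strong law for renewal reward processes: `Z_t / t = (∑_{i=1}^{N_t} Y_i) / t → E[Y]/E[X]`
almost surely as `t → ∞`, for i.i.d. pairs `(X_n, Y_n)`. -/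
theorem stmt11 {Ω : Type*} [MeasurableSpace Ω] (μ : Measure Ω) [IsProbabilityMeasure μ]
    (X Y : ℕ → Ω → ℝ)
    (hXmeas : ∀ i, Measurable (X i)) (hYmeas : ∀ i, Measurable (Y i))
    (hXnonneg : ∀ i, ∀ᵐ ω ∂μ, 0 ≤ X i ω)
    (hiid : ∀ i j, IdentDistrib (fun ω => (X i ω, Y i ω)) (fun ω => (X j ω, Y j ω)) μ μ)
    (hindep : iIndepFun (fun i ω => (X i ω, Y i ω)) μ)
    (hX0 : μ {ω | X 0 ω = 0} < 1)
    (hXint : Integrable (X 0) μ) (hYint : Integrable (Y 0) μ)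
    (T : ℕ → Ω → ℝ) (hT : ∀ n ω, T n ω = ∑ i ∈ Finset.range n, X i ω)
    (N : ℝ → Ω → ℕ) (hN : ∀ t ω, N t ω = sSup {n | T n ω ≤ t}) :
    ∀ᵐ ω ∂μ, Tendsto (fun t : ℝ => (∑ i ∈ Finset.range (N t ω), Y i ω) / t) atTop
      (nhds ((∫ ω, Y 0 ω ∂μ) / ∫ ω, X 0 ω ∂μ)) :=
  stmt11_general μ X Y hXnonneg hiid hindep hX0 hXint hYint T hT N hN
end

section
/- For the Gamma(1,\mu) case (Y^s exponential with rate \mu) and Y^d exponential with rate \lambda \neq \mu: P_d = 1 - (\mu/(\mu-\lambda)) (L(\lambda)-L(\mu))/(1-L(\mu)), where P_d = P(D_{B(Y^s)} - Y^s \geq Y^d). -/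
/-!
Split the event according to the gap `(D_k, D_{k+1}]` of the renewal sequence into which `Y^s`
falls; there `B(Y^s) = k + 1`, and the event is null when `Y^s` is never reached, because then
`B(Y^s) = 0`. Given `D_k = a` and `C_k = x`, the `k`-th piece has probability
`∫_a^{a+x} μ e^{-μs} (1 - e^{-λ(a+x-s)}) ds = e^{-μa} F(x)`, where `F` is the distribution
function of `Exp(μ) + Exp(λ)`. As `D_k` and `C_k` are independent, its expectation is
`L(μ)^k E[F(C)]`, and the geometric series sums to `E[F(C)] / (1 - L(μ))` with
`E[F(C)] = 1 - L(μ) - μ/(μ-λ) (L(λ) - L(μ))`.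
-/

open MeasureTheory ProbabilityTheory Filter Set
open scoped ENNReal Topology
open Real

/-- The distribution function of `S + T` for independent `S ~ Exp(m)` and `T ~ Exp(l)`, `m ≠ l`. -/
noncomputable def hypoexpCDF (m l x : ℝ) : ℝ :=
  1 - rexp (-m * x) - m / (m - l) * (rexp (-l * x) - rexp (-m * x))

theorem integral_exponentialPDF_mul_cdf_sub {m l : ℝ} (hml : m ≠ l) (a x : ℝ) :
    ∫ s in a..a + x, m * rexp (-m * s) * (1 - rexp (-l * (a + x - s)))
      = rexp (-m * a) * hypoexpCDF m l x := by
  have hml' : m - l ≠ 0 := sub_ne_zero.2 hml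
  have hG : ∀ s, HasDerivAt
      (fun s => -rexp (-m * s) + m / (m - l) * (rexp (-l * (a + x - s)) * rexp (-m * s)))
      (m * rexp (-m * s) * (1 - rexp (-l * (a + x - s)))) s := by
    intro s
    have h1 := ((hasDerivAt_id' s).const_mul (-m)).exp
    have h2 := (((hasDerivAt_id' s).const_sub (a + x)).const_mul (-l)).exp
    convert! (h1.neg.add ((h2.mul h1).const_mul (m / (m - l)))) using 1
    field_simp
    ring
  rw [intervalIntegral.integral_eq_sub_of_hasDerivAt (fun s _ => hG s)
    ((by fun_prop : Continuous _).intervalIntegrable _ _)]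
  simp only [hypoexpCDF, sub_self, mul_zero, Real.exp_zero, mul_add, neg_mul, Real.exp_add,
    add_sub_cancel_left]
  field_simp
  ring

theorem hypoexpCDF_nonneg {m l : ℝ} (hm : 0 ≤ m) (hl : 0 ≤ l) (hml : m ≠ l) {x : ℝ}
    (hx : 0 ≤ x) : 0 ≤ hypoexpCDF m l x := by
  have h := integral_exponentialPDF_mul_cdf_sub hml 0 x
  rw [mul_zero, Real.exp_zero, one_mul, zero_add] at h
  rw [← h]
  refine intervalIntegral.integral_nonneg hx fun s hs => mul_nonneg (by positivity) ?_
  simp only [sub_nonneg, Real.exp_le_one_iff]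
  nlinarith [hs.2]

theorem expMeasure_Iic {r x : ℝ} (hr : 0 < r) (hx : 0 ≤ x) :
    expMeasure r (Iic x) = ENNReal.ofReal (1 - rexp (-r * x)) := by
  have := isProbabilityMeasure_expMeasure hr
  rw [← ofReal_cdf, cdf_expMeasure_eq hr, if_pos hx, neg_mul]

theorem ae_pos_of_map_eq_expMeasure {Ω : Type*} [MeasurableSpace Ω] {μ : Measure Ω} {Y : Ω → ℝ}
    {r : ℝ} (hr : 0 < r) (hY : Measurable Y) (hlaw : μ.map Y = expMeasure r) :
    ∀ᵐ ω ∂μ, 0 < Y ω := by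
  refine ae_of_ae_map hY.aemeasurable ?_
  rw [hlaw, ae_iff]
  simpa [← Iic_def] using expMeasure_Iic hr le_rfl

theorem lintegral_expMeasure_mem_Ioc_le_sub {m l : ℝ} (hm : 0 < m) (hl : 0 < l) (hml : m ≠ l)
    {a x : ℝ} (ha : 0 ≤ a) (hx : 0 ≤ x) :
    ∫⁻ s, expMeasure l {t | s ∈ Ioc a (a + x) ∧ t ≤ a + x - s} ∂expMeasure m
      = ENNReal.ofReal (rexp (-m * a) * hypoexpCDF m l x) := by
  have hset : ∀ s, expMeasure l {t | s ∈ Ioc a (a + x) ∧ t ≤ a + x - s}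
      = (Ioc a (a + x)).indicator (fun s => ENNReal.ofReal (1 - rexp (-l * (a + x - s)))) s := by
    intro s
    by_cases hs : s ∈ Ioc a (a + x)
    · simp only [hs, true_and, indicator_of_mem]
      exact expMeasure_Iic hl (sub_nonneg.2 hs.2)
    · simp [hs]
  have hint : IntegrableOn (fun s => m * rexp (-m * s) * (1 - rexp (-l * (a + x - s))))
      (Ioc a (a + x)) := (by fun_prop : Continuous _).integrableOn_Ioc
  simp_rw [hset]
  rw [lintegral_indicator measurableSet_Ioc,
    show expMeasure m = volume.withDensity (exponentialPDF m) from rfl,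
    setLIntegral_withDensity_eq_setLIntegral_mul _
      (show Measurable (exponentialPDF m) from (measurable_exponentialPDFReal m).ennreal_ofReal)
      (by fun_prop) measurableSet_Ioc,
    ← integral_exponentialPDF_mul_cdf_sub hml, intervalIntegral.integral_of_le (by linarith),
    ofReal_integral_eq_lintegral_ofReal hint]
  · refine setLIntegral_congr_fun measurableSet_Ioc fun s hs => ?_
    rw [Pi.mul_apply, exponentialPDF_of_nonneg (by linarith [hs.1]),
      ← ENNReal.ofReal_mul (by positivity)]
    simp only [neg_mul]
  · filter_upwards [ae_restrict_mem measurableSet_Ioc] with s hs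
    refine mul_nonneg (by positivity) (sub_nonneg.2 (Real.exp_le_one_iff.2 ?_))
    nlinarith [hs.2]

namespace ProbabilityTheory

variable {Ω α β : Type*} [MeasurableSpace Ω] [MeasurableSpace α] [MeasurableSpace β]
  {μ : Measure Ω} [IsFiniteMeasure μ] {X : Ω → α} {Y : Ω → β}

theorem IndepFun.measure_preimage_eq_lintegral (hXY : IndepFun X Y μ) (hX : Measurable X)
    (hY : Measurable Y) {S : Set (α × β)} (hS : MeasurableSet S) :
    μ ((fun ω => (X ω, Y ω)) ⁻¹' S) = ∫⁻ ω, μ.map Y (Prod.mk (X ω) ⁻¹' S) ∂μ := by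
  rw [← Measure.map_apply (hX.prodMk hY) hS,
    hXY.map_prod_eq_prod_map_map hX.aemeasurable hY.aemeasurable, Measure.prod_apply hS,
    lintegral_map (measurable_measure_prodMk_left hS) hX]

theorem IndepFun.lintegral_comp_eq_lintegral_lintegral (hXY : IndepFun X Y μ)
    (hX : Measurable X) (hY : Measurable Y) {F : α × β → ℝ≥0∞} (hF : Measurable F) :
    ∫⁻ ω, F (X ω, Y ω) ∂μ = ∫⁻ ω, ∫⁻ y, F (X ω, y) ∂μ.map Y ∂μ := by
  rw [← lintegral_map hF (hX.prodMk hY),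
    hXY.map_prod_eq_prod_map_map hX.aemeasurable hY.aemeasurable, lintegral_prod _ hF.aemeasurable,
    lintegral_map hF.lintegral_prod_right' hX]

end ProbabilityTheory

theorem measure_mem_Ioc_and_le_sub_of_indepFun {Ω : Type*} [MeasurableSpace Ω] {μ : Measure Ω}
    [IsFiniteMeasure μ] {A X S T : Ω → ℝ} {m l : ℝ} (hm : 0 < m) (hl : 0 < l) (hml : m ≠ l)
    (hA : Measurable A) (hX : Measurable X) (hS : Measurable S) (hT : Measurable T)
    (hAX : ∀ᵐ ω ∂μ, 0 ≤ A ω ∧ 0 ≤ X ω)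
    (hSlaw : μ.map S = expMeasure m) (hTlaw : μ.map T = expMeasure l)
    (hindS : IndepFun (fun ω => (A ω, X ω)) S μ)
    (hindT : IndepFun (fun ω => ((A ω, X ω), S ω)) T μ) :
    μ {ω | S ω ∈ Ioc (A ω) (A ω + X ω) ∧ T ω ≤ A ω + X ω - S ω}
      = ∫⁻ ω, ENNReal.ofReal (rexp (-m * A ω) * hypoexpCDF m l (X ω)) ∂μ := by
  have := isProbabilityMeasure_expMeasure hl
  set R : Set (((ℝ × ℝ) × ℝ) × ℝ) :=
    {p | p.1.2 ∈ Ioc p.1.1.1 (p.1.1.1 + p.1.1.2) ∧ p.2 ≤ p.1.1.1 + p.1.1.2 - p.1.2}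
  have hR : MeasurableSet R := by
    simp only [R, mem_Ioc, ofPred_and]
    measurability
  have hAXm : Measurable fun ω => (A ω, X ω) := hA.prodMk hX
  calc μ {ω | S ω ∈ Ioc (A ω) (A ω + X ω) ∧ T ω ≤ A ω + X ω - S ω}
      = μ ((fun ω => (((A ω, X ω), S ω), T ω)) ⁻¹' R) := rfl
    _ = ∫⁻ ω, ∫⁻ s, expMeasure l (Prod.mk ((A ω, X ω), s) ⁻¹' R) ∂expMeasure m ∂μ := by
      rw [hindT.measure_preimage_eq_lintegral (hAXm.prodMk hS) hT hR, hTlaw, ← hSlaw]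
      exact hindS.lintegral_comp_eq_lintegral_lintegral hAXm hS
        (F := fun z => expMeasure l (Prod.mk z ⁻¹' R)) (measurable_measure_prodMk_left hR)
    _ = ∫⁻ ω, ENNReal.ofReal (rexp (-m * A ω) * hypoexpCDF m l (X ω)) ∂μ := by
      refine lintegral_congr_ae ?_
      filter_upwards [hAX] with ω hω
      exact lintegral_expMeasure_mem_Ioc_le_sub hm hl hml hω.1 hω.2

/-- Since `sInf ∅ = 0`, this is `0` when `d` never reaches `s`. -/
noncomputable def firstPassage (d : ℕ → ℝ) (s : ℝ) : ℕ := sInf {j | 1 ≤ j ∧ s ≤ d j}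

theorem firstPassage_eq_of_mem_Ioc {d : ℕ → ℝ} (hd : Monotone d) {s : ℝ} {k : ℕ}
    (h : s ∈ Ioc (d k) (d (k + 1))) : firstPassage d s = k + 1 := by
  refine le_antisymm (Nat.sInf_le ⟨k.succ_pos, h.2⟩) (le_csInf ⟨k + 1, k.succ_pos, h.2⟩ ?_)
  rintro j ⟨-, hj⟩
  by_contra! hjk
  exact (h.1.trans_le hj).not_ge (hd (Nat.lt_succ_iff.1 hjk))

theorem exists_firstPassage_eq_of_le {d : ℕ → ℝ} {s : ℝ} (h0 : d 0 < s)
    (h : s ≤ d (firstPassage d s)) :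
    ∃ k, firstPassage d s = k + 1 ∧ s ∈ Ioc (d k) (d (k + 1)) := by
  unfold firstPassage at h ⊢
  set S := {j | 1 ≤ j ∧ s ≤ d j}
  have hne : S.Nonempty := by
    by_contra hS
    rw [not_nonempty_iff_eq_empty.1 hS, Nat.sInf_empty] at h
    exact h.not_gt h0
  obtain ⟨hpos, hmem⟩ := Nat.sInf_mem hne
  obtain ⟨k, hk⟩ := Nat.exists_eq_add_of_le' hpos
  refine ⟨k, hk, ?_, hk ▸ hmem⟩
  rcases k with _ | k
  · exact h0
  · refine not_le.1 fun hle => ?_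
    exact (Nat.sInf_le (show k + 1 ∈ S from ⟨k.succ_pos, hle⟩)).not_gt (by omega)

theorem le_apply_firstPassage_sub_iff {d : ℕ → ℝ} (hd : Monotone d) {s t : ℝ} (hs : d 0 < s)
    (ht : 0 ≤ t) :
    t ≤ d (firstPassage d s) - s ↔ ∃ k, s ∈ Ioc (d k) (d (k + 1)) ∧ t ≤ d (k + 1) - s := by
  constructor
  · intro h
    obtain ⟨k, hk, hmem⟩ := exists_firstPassage_eq_of_le hs (by linarith)
    exact ⟨k, hmem, hk ▸ h⟩
  · rintro ⟨k, hmem, h⟩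
    rwa [firstPassage_eq_of_mem_Ioc hd hmem]

theorem measure_le_apply_firstPassage_sub_eq_tsum {Ω : Type*} [MeasurableSpace Ω]
    {μ : Measure Ω} {d : ℕ → Ω → ℝ} {S T : Ω → ℝ} (hd : ∀ k, Measurable (d k))
    (hS : Measurable S) (hT : Measurable T) (hmono : ∀ᵐ ω ∂μ, Monotone (d · ω))
    (hS0 : ∀ᵐ ω ∂μ, d 0 ω < S ω) (hT0 : ∀ᵐ ω ∂μ, 0 ≤ T ω) :
    μ {ω | T ω ≤ d (firstPassage (d · ω) (S ω)) ω - S ω}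
      = ∑' k, μ {ω | S ω ∈ Ioc (d k ω) (d (k + 1) ω) ∧ T ω ≤ d (k + 1) ω - S ω} := by
  have hunion : {ω | T ω ≤ d (firstPassage (d · ω) (S ω)) ω - S ω}
      =ᵐ[μ] ⋃ k, {ω | S ω ∈ Ioc (d k ω) (d (k + 1) ω) ∧ T ω ≤ d (k + 1) ω - S ω} := by
    rw [eventuallyEq_set]
    filter_upwards [hmono, hS0, hT0] with ω hω hSω hTω
    simpa only [mem_ofPred_eq, mem_iUnion] using le_apply_firstPassage_sub_iff hω hSω hTω
  rw [measure_congr hunion]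
  refine measure_iUnion₀ (fun j k hjk => measure_mono_null ?_ (ae_iff.1 hmono)) fun k => ?_
  · rintro ω ⟨hj, hk⟩ hω
    exact Set.disjoint_left.1 (hω.pairwise_disjoint_on_Ioc_succ hjk) hj.1 hk.1
  · simp only [mem_Ioc]
    exact (((measurableSet_lt (hd k) hS).inter (measurableSet_le hS (hd (k + 1)))).inter
      (measurableSet_le hT ((hd (k + 1)).sub hS))).nullMeasurableSet

section Laplace

variable {Ω : Type*} [MeasurableSpace Ω] {μ : Measure Ω}

theorem integrable_exp_neg_mul_of_nonneg [IsFiniteMeasure μ] {X : Ω → ℝ} (hX : Measurable X)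
    (hX0 : ∀ᵐ ω ∂μ, 0 ≤ X ω) {s : ℝ} (hs : 0 ≤ s) : Integrable (fun ω => rexp (-s * X ω)) μ := by
  refine Integrable.of_bound (by fun_prop) 1 ?_
  filter_upwards [hX0] with ω hω
  rw [Real.norm_of_nonneg (exp_nonneg _), Real.exp_le_one_iff]
  nlinarith

theorem lintegral_ofReal_exp_neg_mul_lt_one [IsProbabilityMeasure μ] {X : Ω → ℝ}
    (hX0 : ∀ᵐ ω ∂μ, 0 < X ω) {s : ℝ} (hs : 0 < s) :
    ∫⁻ ω, ENNReal.ofReal (rexp (-s * X ω)) ∂μ < 1 := by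
  have hlt : ∀ᵐ ω ∂μ, ENNReal.ofReal (rexp (-s * X ω)) < 1 := by
    filter_upwards [hX0] with ω hω
    rw [ENNReal.ofReal_lt_one, Real.exp_lt_one_iff]
    nlinarith
  calc ∫⁻ ω, ENNReal.ofReal (rexp (-s * X ω)) ∂μ < ∫⁻ _, 1 ∂μ :=
        lintegral_strict_mono (IsProbabilityMeasure.ne_zero μ) aemeasurable_const
          (ne_top_of_le_ne_top (by simp) (lintegral_mono_ae (hlt.mono fun _ => le_of_lt))) hlt
    _ = 1 := by simp

theorem toReal_lintegral_ofReal_hypoexpCDF_comp [IsProbabilityMeasure μ] {X : Ω → ℝ}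
    (hX : Measurable X) (hX0 : ∀ᵐ ω ∂μ, 0 ≤ X ω) {m l : ℝ} (hm : 0 ≤ m) (hl : 0 ≤ l)
    (hml : m ≠ l) :
    (∫⁻ ω, ENNReal.ofReal (hypoexpCDF m l (X ω)) ∂μ).toReal = 1 - ∫ ω, rexp (-m * X ω) ∂μ
      - m / (m - l) * (∫ ω, rexp (-l * X ω) ∂μ - ∫ ω, rexp (-m * X ω) ∂μ) := by
  have hmX := integrable_exp_neg_mul_of_nonneg hX hX0 hm
  have hlX := integrable_exp_neg_mul_of_nonneg hX hX0 hl
  have h1 : Integrable (fun ω => 1 - rexp (-m * X ω)) μ := (integrable_const 1).sub hmX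
  have h2 : Integrable (fun ω => m / (m - l) * (rexp (-l * X ω) - rexp (-m * X ω))) μ :=
    (hlX.sub hmX).const_mul _
  rw [← integral_eq_lintegral_of_nonneg_ae (hX0.mono fun _ => hypoexpCDF_nonneg hm hl hml)
    (by unfold hypoexpCDF; fun_prop)]
  simp only [hypoexpCDF]
  rw [integral_sub h1 h2, integral_sub (integrable_const 1) hmX, integral_const_mul,
    integral_sub hlX hmX, integral_const, probReal_univ, one_smul]

variable {C : ℕ → Ω → ℝ}

theorem lintegral_ofReal_exp_neg_mul_sum (hC : ∀ i, Measurable (C i)) (hindep : iIndepFun C μ)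
    (hident : ∀ i, IdentDistrib (C i) (C 0) μ μ) (s : ℝ) (k : ℕ) :
    ∫⁻ ω, ENNReal.ofReal (rexp (-s * ∑ i ∈ Finset.range k, C i ω)) ∂μ
      = (∫⁻ ω, ENNReal.ofReal (rexp (-s * C 0 ω)) ∂μ) ^ k := by
  have hf : Measurable fun x : ℝ => ENNReal.ofReal (rexp (-s * x)) := by fun_prop
  have hprod : ∀ ω, ENNReal.ofReal (rexp (-s * ∑ i ∈ Finset.range k, C i ω))
      = ∏ i ∈ Finset.range k, ENNReal.ofReal (rexp (-s * C i ω)) := fun ω => by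
    rw [Finset.mul_sum, Real.exp_sum, ENNReal.ofReal_prod_of_nonneg fun i _ => (exp_pos _).le]
  simp_rw [hprod]
  refine (lintegral_prod_eq_prod_lintegral_of_indepFun _
    (fun i ω => ENNReal.ofReal (rexp (-s * C i ω))) (hindep.comp _ fun _ => hf)
    fun i => hf.comp (hC i)).trans ?_
  have hCi : ∀ i, ∫⁻ ω, ENNReal.ofReal (rexp (-s * C i ω)) ∂μ
      = ∫⁻ ω, ENNReal.ofReal (rexp (-s * C 0 ω)) ∂μ := fun i => ((hident i).comp hf).lintegral_eq
  simp only [hCi, Finset.prod_const, Finset.card_range]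

end Laplace

theorem measure_mem_Ioc_sum_and_le_sub {Ω : Type*} [MeasurableSpace Ω] {μ : Measure Ω}
    [IsProbabilityMeasure μ] {C : ℕ → Ω → ℝ} {S T : Ω → ℝ} {m l : ℝ} (hm : 0 < m) (hl : 0 < l)
    (hml : m ≠ l) (hC : ∀ i, Measurable (C i)) (hS : Measurable S) (hT : Measurable T)
    (hC0 : ∀ i, ∀ᵐ ω ∂μ, 0 ≤ C i ω) (hident : ∀ i, IdentDistrib (C i) (C 0) μ μ)
    (hindep : iIndepFun C μ) (hindS : IndepFun (fun ω i => C i ω) S μ)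
    (hindT : IndepFun (fun ω => (S ω, fun i => C i ω)) T μ)
    (hSlaw : μ.map S = expMeasure m) (hTlaw : μ.map T = expMeasure l) (k : ℕ) :
    μ {ω | S ω ∈ Ioc (∑ i ∈ Finset.range k, C i ω) (∑ i ∈ Finset.range (k + 1), C i ω)
        ∧ T ω ≤ ∑ i ∈ Finset.range (k + 1), C i ω - S ω}
      = (∫⁻ ω, ENNReal.ofReal (rexp (-m * C 0 ω)) ∂μ) ^ k
          * ∫⁻ ω, ENNReal.ofReal (hypoexpCDF m l (C 0 ω)) ∂μ := by
  have hsum : ∀ k, Measurable fun ω => ∑ i ∈ Finset.range k, C i ω :=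
    fun k => Finset.measurable_sum _ fun i _ => hC i
  have hφ : Measurable fun v : ℕ → ℝ => (∑ i ∈ Finset.range k, v i, v k) := by fun_prop
  have hnonneg : ∀ᵐ ω ∂μ, 0 ≤ ∑ i ∈ Finset.range k, C i ω ∧ 0 ≤ C k ω := by
    filter_upwards [ae_all_iff.2 hC0] with ω hω
    exact ⟨Finset.sum_nonneg fun i _ => hω i, hω k⟩
  have hf : Measurable fun x : ℝ => ENNReal.ofReal (rexp (-m * x)) := by fun_prop
  have hg : Measurable fun x : ℝ => ENNReal.ofReal (hypoexpCDF m l x) := by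
    unfold hypoexpCDF; fun_prop
  have hindk := (hindep.indepFun_finsetSum_of_notMem hC
    (Finset.notMem_range_self (n := k))).comp hf hg
  rw [Finset.sum_fn] at hindk
  simp_rw [Finset.sum_range_succ]
  rw [measure_mem_Ioc_and_le_sub_of_indepFun hm hl hml (hsum k) (hC k) hS hT hnonneg hSlaw hTlaw
    (hindS.comp hφ measurable_id)
    (hindT.comp ((hφ.comp measurable_snd).prodMk measurable_fst) measurable_id)]
  simp_rw [ENNReal.ofReal_mul (exp_nonneg _)]
  refine (lintegral_mul_eq_lintegral_mul_lintegral_of_indepFun'' (hf.comp (hsum k)).aemeasurable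
    (hg.comp (hC k)).aemeasurable hindk).trans ?_
  exact congrArg₂ (· * ·) (lintegral_ofReal_exp_neg_mul_sum hC hindep hident m k)
    ((hident k).comp hg).lintegral_eq

/-- For `Y^s` exponential with rate `μ` and `Y^d` exponential with rate `λ ≠ μ`:
`P_d = 1 - (μ/(μ-λ)) (L(λ) - L(μ))/(1 - L(μ))` where
`P_d = P(D_{B(Y^s)} - Y^s ≥ Y^d)`. -/
theorem stmt16 {Ω : Type*} [MeasurableSpace Ω] (μ : Measure Ω) [IsProbabilityMeasure μ]
    (C : ℕ → Ω → ℝ) (Ys Yd : Ω → ℝ) (μ0 lam : ℝ) (hμ0 : 0 < μ0) (hlam : 0 < lam)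
    (hne : lam ≠ μ0)
    (hCmeas : ∀ i, Measurable (C i)) (hYsmeas : Measurable Ys) (hYdmeas : Measurable Yd)
    (hCpos : ∀ i, ∀ᵐ ω ∂μ, 0 < C i ω)
    (hCiid : ∀ i j, IdentDistrib (C i) (C j) μ μ)
    (hCindep : iIndepFun C μ)
    (hindepS : IndepFun (fun ω => fun i => C i ω) Ys μ)
    (hindepD : IndepFun (fun ω => (Ys ω, fun i => C i ω)) Yd μ)
    (hYs : μ.map Ys = expMeasure μ0) (hYd : μ.map Yd = expMeasure lam)
    (D : ℕ → Ω → ℝ) (hD : ∀ k ω, D k ω = ∑ i ∈ Finset.range k, C i ω)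
    (B : ℝ → Ω → ℕ) (hB : ∀ t ω, B t ω = sInf {k | 1 ≤ k ∧ t ≤ D k ω})
    (L : ℝ → ℝ) (hL : ∀ s, L s = ∫ ω, Real.exp (-s * C 0 ω) ∂μ) :
    (μ {ω | Yd ω ≤ D (B (Ys ω) ω) ω - Ys ω}).toReal
      = 1 - (μ0 / (μ0 - lam)) * ((L lam - L μ0) / (1 - L μ0)) := by
  have hC0 : ∀ i, ∀ᵐ ω ∂μ, 0 ≤ C i ω := fun i => (hCpos i).mono fun _ => le_of_lt
  have hmono : ∀ᵐ ω ∂μ, Monotone (D · ω) := by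
    filter_upwards [ae_all_iff.2 hC0] with ω hω
    exact monotone_nat_of_le_succ fun k => by simp [hD, Finset.sum_range_succ, hω k]
  have hD0 : ∀ᵐ ω ∂μ, D 0 ω < Ys ω := by
    filter_upwards [ae_pos_of_map_eq_expMeasure hμ0 hYsmeas hYs] with ω hω
    simpa [hD] using hω
  have hDmeas : ∀ k, Measurable (D k) := fun k => by
    rw [show D k = _ from funext (hD k)]
    exact Finset.measurable_sum _ fun i _ => hCmeas i
  set P := ∫⁻ ω, ENNReal.ofReal (rexp (-μ0 * C 0 ω)) ∂μ
  have hP : P < 1 := lintegral_ofReal_exp_neg_mul_lt_one (hCpos 0) hμ0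
  have hPL : P.toReal = L μ0 := by
    rw [hL, integral_eq_lintegral_of_nonneg_ae (ae_of_all _ fun _ => exp_nonneg _) (by fun_prop)]
  have hKL : (∫⁻ ω, ENNReal.ofReal (hypoexpCDF μ0 lam (C 0 ω)) ∂μ).toReal
      = 1 - L μ0 - μ0 / (μ0 - lam) * (L lam - L μ0) := by
    rw [hL, hL]
    exact toReal_lintegral_ofReal_hypoexpCDF_comp (hCmeas 0) (hC0 0) hμ0.le hlam.le hne.symm
  have hL1 : 0 < 1 - L μ0 :=
    sub_pos.2 (hPL ▸ ENNReal.toReal_lt_of_lt_ofReal (by rwa [ENNReal.ofReal_one]))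
  have hμ0lam : μ0 - lam ≠ 0 := sub_ne_zero.2 hne.symm
  have hBfp : ∀ t ω, B t ω = firstPassage (D · ω) t := hB
  simp only [hBfp]
  rw [measure_le_apply_firstPassage_sub_eq_tsum hDmeas hYsmeas hYdmeas hmono hD0
    ((ae_pos_of_map_eq_expMeasure hlam hYdmeas hYd).mono fun _ => le_of_lt)]
  simp only [hD]
  simp_rw [measure_mem_Ioc_sum_and_le_sub hμ0 hlam hne.symm hCmeas hYsmeas hYdmeas hC0
    (fun i => hCiid i 0) hCindep hindepS hindepD hYs hYd]
  rw [ENNReal.tsum_mul_right, ENNReal.tsum_geometric, ENNReal.toReal_mul, ENNReal.toReal_inv,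
    ENNReal.toReal_sub_of_le hP.le ENNReal.one_ne_top, hPL, hKL, ENNReal.toReal_one]
  field_simp
end
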